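/- arXiv:2506.08886 — 3 statements merged into one kernel-verified Lean document; each statement's English description precedes it below -/
import Mathlib

section
/- Let G be a finite graph with loops at all vertices, and let H be obtained from G by deleting a single edge uv (u ≠ v). Then the strict domination numbers satisfy -4 ≤ γ(G) - γ(H) ≤ 2, where γ(G) = min { f(V) : f is a strictly majoritarian opinion function on G }. -/
open scoped Classical
open Finset

/-- Sum of opinions over the closed neighborhood of `v` (closed since every
vertex has a loop, so `v` itself is counted). -/
noncomputable def nbrSum {V : Type*} [Fintype V] (G : SimpleGraph V) (f : V → ℤ) (v : V) : ℤ :=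
  ∑ w ∈ univ.filter (fun w => G.Adj v w ∨ w = v), f w

/-- `f` is an opinion function: every value is `1` or `-1`. -/
def IsOpinion {V : Type*} (f : V → ℤ) : Prop := ∀ v, f v = 1 ∨ f v = -1

/-- The set of vertices voting 'yes'. -/
noncomputable def yesVoters {V : Type*} [Fintype V] (G : SimpleGraph V) (f : V → ℤ) : Finset V :=
  univ.filter (fun v => 0 < nbrSum G f v)

/-- `f` is strictly majoritarian on `G`: more than `|V|/2` vertices vote 'yes'. -/
def Majoritarian {V : Type*} [Fintype V] (G : SimpleGraph V) (f : V → ℤ) : Prop :=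
  Fintype.card V < 2 * (yesVoters G f).card

/-- The strict domination number: minimum of `f(V)` over strictly majoritarian
opinion functions. -/
noncomputable def gamma {V : Type*} [Fintype V] (G : SimpleGraph V) : ℤ :=
  sInf {t : ℤ | ∃ f : V → ℤ, IsOpinion f ∧ Majoritarian G f ∧ t = ∑ v, f v}

/-!
Removing the edge `uv` changes only the neighbourhood sums at `u` and `v`, each by at most `1`.
A strictly majoritarian `f` on `G` therefore becomes one on `G - uv` after raising, at each of
`u` and `v`, one `-1` in the closed neighbourhood to `1`; this costs at most `4`. Conversely, if
`f` is strictly majoritarian on `G - uv` and `f u ≤ f v`, setting `f u := 1` makes every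
neighbourhood sum in `G` at least the old one in `G - uv`, at a cost of at most `2`.
-/

section

variable {V : Type*}

lemma IsOpinion.le_one {f : V → ℤ} (hf : IsOpinion f) (a : V) : f a ≤ 1 := by
  rcases hf a with h | h <;> omega

lemma IsOpinion.neg_one_le {f : V → ℤ} (hf : IsOpinion f) (a : V) : -1 ≤ f a := by
  rcases hf a with h | h <;> omega

lemma IsOpinion.update_one {f : V → ℤ} (hf : IsOpinion f) (x : V) :
    IsOpinion (Function.update f x 1) := by
  intro a
  rcases eq_or_ne a x with rfl | hax
  · simp
  · simpa [hax] using hf a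

lemma IsOpinion.le_update_one {f : V → ℤ} (hf : IsOpinion f) (x : V) :
    f ≤ Function.update f x 1 :=
  le_update_iff.mpr ⟨hf.le_one x, fun _ _ => le_rfl⟩

variable [Fintype V] (K : SimpleGraph V)

lemma sum_update (f : V → ℤ) (x : V) (c : ℤ) :
    ∑ a, Function.update f x c a = ∑ a, f a + (c - f x) := by
  rw [sum_update_of_mem (mem_univ x), sdiff_singleton_eq_erase, ← add_sum_erase _ f (mem_univ x)]
  ring

lemma nbrSum_mono {f g : V → ℤ} (h : f ≤ g) (w : V) : nbrSum K f w ≤ nbrSum K g w :=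
  sum_le_sum fun a _ => h a

lemma nbrSum_update_of_mem (f : V → ℤ) {x w : V} (hx : K.Adj w x ∨ x = w) (c : ℤ) :
    nbrSum K (Function.update f x c) w = nbrSum K f w + (c - f x) := by
  have hmem : x ∈ univ.filter (fun y => K.Adj w y ∨ y = w) := by simpa using hx
  rw [nbrSum, nbrSum, sum_update_of_mem hmem, sdiff_singleton_eq_erase, ← add_sum_erase _ f hmem]
  ring

lemma exists_mem_eq_neg_one_of_nbrSum_nonpos {f : V → ℤ} (hf : IsOpinion f) {w : V}
    (h : nbrSum K f w ≤ 0) : ∃ x, (K.Adj w x ∨ x = w) ∧ f x = -1 := by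
  by_contra! hne
  refine h.not_gt (sum_pos (fun x hx => ?_) ⟨w, by simp⟩)
  rcases hf x with h1 | h1
  · omega
  · exact absurd h1 (hne x (by simpa using hx))

/-- Raising a single `-1` turns a vanishing neighbourhood sum positive. -/
lemma exists_le_nbrSum_pos {f : V → ℤ} (hf : IsOpinion f) (w : V) :
    ∃ g : V → ℤ, IsOpinion g ∧ f ≤ g ∧ ∑ a, g a ≤ ∑ a, f a + 2 ∧
      (0 ≤ nbrSum K f w → 0 < nbrSum K g w) := by
  by_cases hpos : 0 < nbrSum K f w
  · exact ⟨f, hf, le_rfl, by omega, fun _ => hpos⟩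
  obtain ⟨x, hx, hfx⟩ := exists_mem_eq_neg_one_of_nbrSum_nonpos K hf (not_lt.mp hpos)
  refine ⟨Function.update f x 1, hf.update_one x, hf.le_update_one x, ?_, fun h0 => ?_⟩
  · rw [sum_update, hfx]
    omega
  · rw [nbrSum_update_of_mem K f hx, hfx]
    omega

lemma Majoritarian.of_nbrSum_pos {K' : SimpleGraph V} {f g : V → ℤ}
    (h : ∀ w, 0 < nbrSum K f w → 0 < nbrSum K' g w) (hm : Majoritarian K f) :
    Majoritarian K' g := by
  refine hm.trans_le (Nat.mul_le_mul_left 2 (card_le_card fun w hw => ?_))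
  simp only [yesVoters, mem_filter, mem_univ, true_and] at hw ⊢
  exact h w hw

lemma bddBelow_opinionSums :
    BddBelow {t : ℤ | ∃ f : V → ℤ, IsOpinion f ∧ Majoritarian K f ∧ t = ∑ v, f v} := by
  refine ⟨-(Fintype.card V : ℤ), ?_⟩
  rintro t ⟨f, hf, -, rfl⟩
  simpa using sum_le_sum fun a (_ : a ∈ univ) => hf.neg_one_le a

lemma gamma_le_sum {f : V → ℤ} (hf : IsOpinion f) (hm : Majoritarian K f) :
    gamma K ≤ ∑ v, f v :=
  csInf_le (bddBelow_opinionSums K) ⟨f, hf, hm, rfl⟩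

lemma majoritarian_one [Nonempty V] : Majoritarian K (fun _ => 1) := by
  have hyes : yesVoters K (fun _ => (1 : ℤ)) = univ := by
    refine eq_univ_of_forall fun w => ?_
    simp only [yesVoters, nbrSum, mem_filter, mem_univ, true_and]
    exact sum_pos (fun _ _ => one_pos) ⟨w, by simp⟩
  have : 0 < Fintype.card V := Fintype.card_pos
  rw [Majoritarian, hyes, card_univ]
  omega

lemma exists_sum_eq_gamma [Nonempty V] :
    ∃ f : V → ℤ, IsOpinion f ∧ Majoritarian K f ∧ gamma K = ∑ v, f v := by
  refine Int.csInf_mem ?_ (bddBelow_opinionSums K)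
  exact ⟨_, fun _ => 1, fun _ => Or.inl rfl, majoritarian_one K, rfl⟩

variable {K} {u v : V}

lemma nbrSum_eq_nbrSum_deleteEdges_add (hadj : K.Adj u v) (f : V → ℤ) :
    nbrSum K f u = nbrSum (K.deleteEdges {s(u, v)}) f u + f v := by
  have hset : univ.filter (fun y => (K.deleteEdges {s(u, v)}).Adj u y ∨ y = u) =
      (univ.filter (fun y => K.Adj u y ∨ y = u)).erase v := by
    ext x
    rcases eq_or_ne x v with rfl | hx
    · simp [hadj.ne.symm]
    · simp [hx, hadj.ne]
  have hv : v ∈ univ.filter (fun y => K.Adj u y ∨ y = u) := by simp [hadj]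
  rw [nbrSum, nbrSum, ← add_sum_erase _ f hv, add_comm]
  congr 1
  convert congrArg (∑ w ∈ ·, f w) hset.symm

lemma nbrSum_eq_nbrSum_deleteEdges_add' (hadj : K.Adj u v) (f : V → ℤ) :
    nbrSum K f v = nbrSum (K.deleteEdges {s(u, v)}) f v + f u := by
  rw [Sym2.eq_swap]
  exact nbrSum_eq_nbrSum_deleteEdges_add hadj.symm f

lemma nbrSum_deleteEdges_of_ne {w : V} (hwu : w ≠ u) (hwv : w ≠ v) (f : V → ℤ) :
    nbrSum (K.deleteEdges {s(u, v)}) f w = nbrSum K f w := by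
  unfold nbrSum
  congr 1
  ext x
  simp [hwu, hwv]

lemma gamma_deleteEdges_le (hadj : K.Adj u v) :
    gamma (K.deleteEdges {s(u, v)}) ≤ gamma K + 4 := by
  have : Nonempty V := ⟨u⟩
  set H := K.deleteEdges {s(u, v)}
  obtain ⟨f, hf, hm, hγ⟩ := exists_sum_eq_gamma K
  obtain ⟨g₁, hg₁, hfg₁, hsum₁, hu⟩ := exists_le_nbrSum_pos H hf u
  obtain ⟨g₂, hg₂, hg₁g₂, hsum₂, hv⟩ := exists_le_nbrSum_pos H hg₁ v
  have hpos : ∀ w, 0 < nbrSum K f w → 0 < nbrSum H g₂ w := by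
    intro w hw
    by_cases hwu : w = u
    · rw [hwu] at hw ⊢
      have : nbrSum K f u = nbrSum H f u + f v := nbrSum_eq_nbrSum_deleteEdges_add hadj f
      have := hf.le_one v
      exact (hu (by omega)).trans_le (nbrSum_mono H hg₁g₂ u)
    by_cases hwv : w = v
    · rw [hwv] at hw ⊢
      have : nbrSum K f v = nbrSum H f v + f u := nbrSum_eq_nbrSum_deleteEdges_add' hadj f
      have := hf.le_one u
      exact hv ((show 0 ≤ nbrSum H f v by omega).trans (nbrSum_mono H hfg₁ v))
    rw [← nbrSum_deleteEdges_of_ne hwu hwv] at hw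
    exact hw.trans_le (nbrSum_mono H (hfg₁.trans hg₁g₂) w)
  have := gamma_le_sum H hg₂ (hm.of_nbrSum_pos K hpos)
  omega

lemma gamma_le_sum_of_majoritarian_deleteEdges (hadj : K.Adj u v) {f : V → ℤ}
    (hf : IsOpinion f) (hm : Majoritarian (K.deleteEdges {s(u, v)}) f) (huv : f u ≤ f v) :
    gamma K ≤ ∑ a, f a + 2 := by
  set H := K.deleteEdges {s(u, v)}
  set g := Function.update f u 1
  have hfg : f ≤ g := hf.le_update_one u
  have hpos : ∀ w, 0 < nbrSum H f w → 0 < nbrSum K g w := by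
    intro w hw
    by_cases hwu : w = u
    · rw [hwu] at hw ⊢
      have : nbrSum H g u = nbrSum H f u + (1 - f u) := nbrSum_update_of_mem H f (Or.inr rfl) 1
      have : g v = f v := Function.update_of_ne hadj.ne.symm _ _
      have : nbrSum K g u = nbrSum H g u + g v := nbrSum_eq_nbrSum_deleteEdges_add hadj g
      omega
    by_cases hwv : w = v
    · rw [hwv] at hw ⊢
      have := nbrSum_mono H hfg v
      have : g u = 1 := Function.update_self _ _ _
      have : nbrSum K g v = nbrSum H g v + g u := nbrSum_eq_nbrSum_deleteEdges_add' hadj g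
      omega
    rw [nbrSum_deleteEdges_of_ne hwu hwv] at hw
    exact hw.trans_le (nbrSum_mono K hfg w)
  have := gamma_le_sum K (hf.update_one u) (hm.of_nbrSum_pos H hpos)
  rw [sum_update] at this
  have := hf.neg_one_le u
  omega

lemma gamma_le_gamma_deleteEdges (hadj : K.Adj u v) :
    gamma K ≤ gamma (K.deleteEdges {s(u, v)}) + 2 := by
  have : Nonempty V := ⟨u⟩
  obtain ⟨f, hf, hm, hγ⟩ := exists_sum_eq_gamma (K.deleteEdges {s(u, v)})
  rw [hγ]
  rcases le_total (f u) (f v) with huv | hvu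
  · exact gamma_le_sum_of_majoritarian_deleteEdges hadj hf hm huv
  · rw [Sym2.eq_swap] at hm
    exact gamma_le_sum_of_majoritarian_deleteEdges hadj.symm hf hm hvu

end

theorem stmt1_general {V : Type*} [Fintype V] (G : SimpleGraph V) (u v : V)
    (hadj : G.Adj u v) :
    -4 ≤ gamma G - gamma (G.deleteEdges {s(u, v)}) ∧
      gamma G - gamma (G.deleteEdges {s(u, v)}) ≤ 2 := by
  have := gamma_deleteEdges_le hadj
  have := gamma_le_gamma_deleteEdges hadj
  constructor <;> omega

theorem stmt1 {V : Type*} [Fintype V] [Nonempty V] (G : SimpleGraph V) (u v : V)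
    (huv : u ≠ v) (hadj : G.Adj u v) :
    -4 ≤ gamma G - gamma (G.deleteEdges {s(u, v)}) ∧
      gamma G - gamma (G.deleteEdges {s(u, v)}) ≤ 2 :=
  stmt1_general G u v hadj
end

section
/- Let G be a finite graph with loops and let f be strictly majoritarian on G. Let G' be obtained from G by adding an edge uv with f(u) = f(v) = -1. Then there exists an opinion function f' on G' that is strictly majoritarian with f'(V) ≤ f(V) + 2; consequently γ(G') ≤ γ(G) + 2 whenever some optimal f for G has f(u) = f(v) = -1. -/
open scoped Classical
open Finset

/-- `nbrSum` as a sum over any finset describing the closed neighborhood. -/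
lemma nbrSum_eq_over {V : Type*} [Fintype V] (G : SimpleGraph V) (f : V → ℤ) (v : V)
    (s : Finset V) (h : ∀ x, x ∈ s ↔ G.Adj v x ∨ x = v) :
    nbrSum G f v = ∑ x ∈ s, f x := by
  unfold nbrSum
  apply Finset.sum_congr _ (fun _ _ => rfl)
  ext x
  simp [h]

theorem stmt12 {V : Type*} [Fintype V] [Nonempty V] (G : SimpleGraph V) (f : V → ℤ) (u v : V)
    (huv : u ≠ v) (hadj : ¬ G.Adj u v) (hf : IsOpinion f) (hmaj : Majoritarian G f)
    (hu : f u = -1) (hv : f v = -1) :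
    (∃ f' : V → ℤ, IsOpinion f' ∧
      Majoritarian (G ⊔ SimpleGraph.fromEdgeSet {s(u, v)}) f' ∧
      ∑ w, f' w ≤ (∑ w, f w) + 2) ∧
    (∑ w, f w = gamma G →
      gamma (G ⊔ SimpleGraph.fromEdgeSet {s(u, v)}) ≤ gamma G + 2) := by
  classical
  set G' := G ⊔ SimpleGraph.fromEdgeSet {s(u, v)} with hG'
  set f' := Function.update f u 1 with hf'def
  have hfe : ∀ x, f' x = f x + (if x = u then 2 else 0) := by
    intro x
    by_cases hx : x = u
    · subst hx; simp [hf'def, hu]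
    · simp [hf'def, Function.update_of_ne hx, hx]
  have hsum : ∀ s : Finset V, ∑ x ∈ s, f' x = (∑ x ∈ s, f x) + (if u ∈ s then 2 else 0) := by
    intro s
    simp only [hfe, Finset.sum_add_distrib, Finset.sum_ite_eq' s u (fun _ => (2:ℤ))]
  have hf'op : IsOpinion f' := by
    intro x
    by_cases hx : x = u
    · subst hx; left; simp [hf'def]
    · rw [hf'def, Function.update_of_ne hx]; exact hf x
  have hadj' : ∀ a b, G'.Adj a b ↔ G.Adj a b ∨ (s(a, b) = s(u, v) ∧ a ≠ b) := by
    intro a b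
    simp [hG', SimpleGraph.fromEdgeSet_adj]
  have hkey : ∀ w, nbrSum G f w ≤ nbrSum G' f' w := by
    intro w
    set S : Finset V := univ.filter (fun x => G.Adj w x ∨ x = w) with hSdef
    have hSmem : ∀ x, x ∈ S ↔ G.Adj w x ∨ x = w := by
      intro x; simp [hSdef]
    have hG : nbrSum G f w = ∑ x ∈ S, f x := nbrSum_eq_over G f w S hSmem
    by_cases hwu : w = u
    · subst hwu
      have hvnot : v ∉ S := by
        rw [hSmem]
        rintro (h | h)
        · exact hadj h
        · exact huv h.symm
      have humem : w ∈ S := by rw [hSmem]; exact Or.inr rfl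
      have hG' : nbrSum G' f' w = ∑ x ∈ insert v S, f' x := by
        apply nbrSum_eq_over
        intro x
        rw [Finset.mem_insert, hSmem, hadj']
        constructor
        · rintro (h | (h | h))
          · subst h; exact Or.inl (Or.inr ⟨rfl, huv⟩)
          · exact Or.inl (Or.inl h)
          · exact Or.inr h
        · rintro ((h | ⟨hs, hne⟩) | h)
          · exact Or.inr (Or.inl h)
          · rw [Sym2.eq_iff] at hs
            rcases hs with ⟨_, h2⟩ | ⟨h1, _⟩
            · exact Or.inl h2
            · exact absurd h1 huv
          · exact Or.inr (Or.inr h)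
      rw [hG, hG', Finset.sum_insert hvnot, hsum, if_pos humem]
      have hfv : f' v = -1 := by
        rw [hf'def, Function.update_of_ne (Ne.symm huv)]; exact hv
      rw [hfv]; linarith
    · by_cases hwv : w = v
      · subst hwv
        have hunot : u ∉ S := by
          rw [hSmem]
          rintro (h | h)
          · exact hadj h.symm
          · exact huv h
        have hG' : nbrSum G' f' w = ∑ x ∈ insert u S, f' x := by
          apply nbrSum_eq_over
          intro x
          rw [Finset.mem_insert, hSmem, hadj']
          constructor
          · rintro (h | (h | h))
            · subst h
              exact Or.inl (Or.inr ⟨Sym2.eq_swap, Ne.symm huv⟩)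
            · exact Or.inl (Or.inl h)
            · exact Or.inr h
          · rintro ((h | ⟨hs, hne⟩) | h)
            · exact Or.inr (Or.inl h)
            · rw [Sym2.eq_iff] at hs
              rcases hs with ⟨h1, _⟩ | ⟨_, h2⟩
              · exact absurd h1.symm huv
              · exact Or.inl h2
            · exact Or.inr (Or.inr h)
        rw [hG, hG', Finset.sum_insert hunot, hsum, if_neg hunot]
        have hfu : f' u = 1 := by simp [hf'def]
        rw [hfu]; linarith
      · have hG' : nbrSum G' f' w = ∑ x ∈ S, f' x := by
          apply nbrSum_eq_over
          intro x
          rw [hSmem, hadj']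
          constructor
          · rintro (h | h)
            · exact Or.inl (Or.inl h)
            · exact Or.inr h
          · rintro ((h | ⟨hs, hne⟩) | h)
            · exact Or.inl h
            · exfalso
              rw [Sym2.eq_iff] at hs
              rcases hs with ⟨h1, _⟩ | ⟨h2, _⟩
              · exact hwu h1
              · exact hwv h2
            · exact Or.inr h
        rw [hG, hG', hsum]
        split <;> linarith
  have hsubset : yesVoters G f ⊆ yesVoters G' f' := by
    intro x hx
    simp only [yesVoters, Finset.mem_filter, Finset.mem_univ, true_and] at hx ⊢
    exact lt_of_lt_of_le hx (hkey x)
  have hmaj' : Majoritarian G' f' := by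
    unfold Majoritarian at hmaj ⊢
    have := Finset.card_le_card hsubset
    omega
  have hsumtot : ∑ w, f' w = (∑ w, f w) + 2 := by
    rw [hsum Finset.univ, if_pos (Finset.mem_univ u)]
  constructor
  · exact ⟨f', hf'op, hmaj', le_of_eq hsumtot⟩
  · intro hopt
    have hbdd : BddBelow {t : ℤ | ∃ g : V → ℤ, IsOpinion g ∧ Majoritarian G' g ∧ t = ∑ x, g x} := by
      refine ⟨-(Fintype.card V : ℤ), ?_⟩
      rintro t ⟨g, hg, _, rfl⟩
      have hge : ∀ x, (-1 : ℤ) ≤ g x := by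
        intro x; rcases hg x with h | h <;> omega
      have h1 : ∑ _x : V, (-1 : ℤ) = -(Fintype.card V : ℤ) := by simp
      have h2 : ∑ _x : V, (-1 : ℤ) ≤ ∑ x, g x :=
        Finset.sum_le_sum (fun x _ => hge x)
      omega
    have hmem : (∑ w, f' w) ∈
        {t : ℤ | ∃ g : V → ℤ, IsOpinion g ∧ Majoritarian G' g ∧ t = ∑ x, g x} :=
      ⟨f', hf'op, hmaj', rfl⟩
    have h3 : gamma G' ≤ ∑ w, f' w := csInf_le hbdd hmem
    omega
end

section
/- Let G be a finite graph with loops, f strictly majoritarian on G, and let G' = G + uv be obtained by adding an edge between u and v where f(u) = -1 and f(v) = 1. If v votes 'no' in G (f(N_v) ≤ 0), then f remains strictly majoritarian on G'; if v votes 'yes', then flipping f(u) to +1 yields a strictly majoritarian function on G' with total opinion f(V) + 2. -/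
open scoped Classical
open Finset

theorem stmt15 {V : Type*} [Fintype V] (G : SimpleGraph V) (f : V → ℤ) (u v : V)
    (huv : u ≠ v) (hadj : ¬ G.Adj u v) (hf : IsOpinion f) (hmaj : Majoritarian G f)
    (hu : f u = -1) (hv : f v = 1) :
    (nbrSum G f v ≤ 0 → Majoritarian (G ⊔ SimpleGraph.fromEdgeSet {s(u, v)}) f) ∧
    (0 < nbrSum G f v →
      Majoritarian (G ⊔ SimpleGraph.fromEdgeSet {s(u, v)}) (Function.update f u 1) ∧
      ∑ w, Function.update f u 1 w = (∑ w, f w) + 2) := by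
  classical
  obtain ⟨G', hG'⟩ : ∃ G', G ⊔ SimpleGraph.fromEdgeSet {s(u, v)} = G' := ⟨_, rfl⟩
  rw [hG']
  have hadj' : ∀ a b, G'.Adj a b ↔ G.Adj a b ∨ (a = u ∧ b = v) ∨ (a = v ∧ b = u) := by
    intro a b
    rw [← hG']
    simp only [SimpleGraph.sup_adj, SimpleGraph.fromEdgeSet_adj, Set.mem_singleton_iff,
      Sym2.eq_iff]
    constructor
    · rintro (h | ⟨h, _⟩) <;> tauto
    · rintro (h | ⟨rfl, rfl⟩ | ⟨rfl, rfl⟩)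
      · exact Or.inl h
      · exact Or.inr ⟨Or.inl ⟨rfl, rfl⟩, huv⟩
      · exact Or.inr ⟨Or.inr ⟨rfl, rfl⟩, huv.symm⟩
  -- neighborhoods away from u, v are unchanged
  have hNeq : ∀ w : V, w ≠ u → w ≠ v →
      (univ.filter (fun x => G'.Adj w x ∨ x = w)) =
        (univ.filter (fun x => G.Adj w x ∨ x = w)) := by
    intro w hwu hwv
    ext x
    simp only [mem_filter, mem_univ, true_and]
    rw [hadj']
    constructor
    · rintro ((h | ⟨h1, h2⟩ | ⟨h1, h2⟩) | h)
      · exact Or.inl h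
      · exact absurd h1 hwu
      · exact absurd h1 hwv
      · exact Or.inr h
    · tauto
  have hunotin : u ∉ univ.filter (fun x => G.Adj v x ∨ x = v) := by
    simp only [mem_filter, mem_univ, true_and, not_or]
    exact ⟨fun h => hadj h.symm, fun h => huv h⟩
  have hvnotin : v ∉ univ.filter (fun x => G.Adj u x ∨ x = u) := by
    simp only [mem_filter, mem_univ, true_and, not_or]
    exact ⟨hadj, fun h => huv h.symm⟩
  have hNv : (univ.filter (fun x => G'.Adj v x ∨ x = v)) =
      insert u (univ.filter (fun x => G.Adj v x ∨ x = v)) := by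
    ext x
    simp only [mem_insert, mem_filter, mem_univ, true_and]
    rw [hadj']
    constructor
    · rintro ((h | ⟨h1, h2⟩ | ⟨h1, h2⟩) | h)
      · exact Or.inr (Or.inl h)
      · exact absurd h1.symm huv
      · exact Or.inl h2
      · exact Or.inr (Or.inr h)
    · rintro (rfl | h | h)
      · exact Or.inl (Or.inr (Or.inr ⟨rfl, rfl⟩))
      · exact Or.inl (Or.inl h)
      · exact Or.inr h
  have hNu : (univ.filter (fun x => G'.Adj u x ∨ x = u)) =
      insert v (univ.filter (fun x => G.Adj u x ∨ x = u)) := by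
    ext x
    simp only [mem_insert, mem_filter, mem_univ, true_and]
    rw [hadj']
    constructor
    · rintro ((h | ⟨h1, h2⟩ | ⟨h1, h2⟩) | h)
      · exact Or.inr (Or.inl h)
      · exact Or.inl h2
      · exact absurd h1 huv
      · exact Or.inr (Or.inr h)
    · rintro (rfl | h | h)
      · exact Or.inl (Or.inr (Or.inl ⟨rfl, rfl⟩))
      · exact Or.inl (Or.inl h)
      · exact Or.inr h
  have hsumv : nbrSum G' f v = f u + nbrSum G f v := by
    unfold nbrSum; rw [hNv, Finset.sum_insert hunotin]
  have hsumu : nbrSum G' f u = f v + nbrSum G f u := by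
    unfold nbrSum; rw [hNu, Finset.sum_insert hvnotin]
  have hsumw : ∀ w : V, w ≠ u → w ≠ v → nbrSum G' f w = nbrSum G f w := by
    intro w hwu hwv; unfold nbrSum; rw [hNeq w hwu hwv]
  -- sums of the updated function
  have hupd : ∀ S : Finset V,
      ∑ x ∈ S, Function.update f u 1 x = (∑ x ∈ S, f x) + (if u ∈ S then 2 else 0) := by
    intro S
    have h1 : ∀ x, Function.update f u 1 x = f x + (if x = u then 2 else 0) := by
      intro x
      rcases eq_or_ne x u with rfl | h
      · simp [hu]
      · simp [Function.update_of_ne h, h]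
    simp_rw [h1, Finset.sum_add_distrib, Finset.sum_ite_eq' S u (fun _ => (2 : ℤ))]
  have majle : ∀ g : V → ℤ, yesVoters G f ⊆ yesVoters G' g → Majoritarian G' g := by
    intro g hsub
    exact hmaj.trans_le (Nat.mul_le_mul_left 2 (Finset.card_le_card hsub))
  constructor
  · intro h0
    apply majle
    intro w hw
    simp only [yesVoters, mem_filter, mem_univ, true_and] at hw ⊢
    rcases eq_or_ne w u with h | hwu
    · rw [h] at hw ⊢; rw [hsumu, hv]; linarith
    rcases eq_or_ne w v with h | hwv
    · rw [h] at hw; exact absurd hw (not_lt.mpr h0)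
    · rw [hsumw w hwu hwv]; exact hw
  · intro h0
    have hsum2 : ∑ w, Function.update f u 1 w = (∑ w, f w) + 2 := by
      rw [hupd univ]; simp
    refine ⟨majle _ ?_, hsum2⟩
    intro w hw
    simp only [yesVoters, mem_filter, mem_univ, true_and] at hw ⊢
    have key : ∀ z : V, nbrSum G' (Function.update f u 1) z =
        nbrSum G' f z +
          (if u ∈ univ.filter (fun x => G'.Adj z x ∨ x = z) then 2 else 0) := by
      intro z; unfold nbrSum; rw [hupd]
    rcases eq_or_ne w u with h | hwu
    · rw [h] at hw ⊢
      rw [key, hsumu, hv]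
      have hm : u ∈ univ.filter (fun x => G'.Adj u x ∨ x = u) := by simp
      rw [if_pos hm]; linarith
    rcases eq_or_ne w v with h | hwv
    · rw [h] at hw ⊢
      rw [key, hsumv, hu]
      have hm : u ∈ univ.filter (fun x => G'.Adj v x ∨ x = v) := by
        rw [hNv]; exact mem_insert_self _ _
      rw [if_pos hm]; linarith
    · rw [key, hsumw w hwu hwv]
      split <;> linarith
end
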